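/- arXiv:2411.11071 — 2 statements merged into one kernel-verified Lean document; each statement's English description precedes it below -/
import Mathlib

section
/- Let Ω be a finite subset of vertices of a locally finite graph G, and let l be a positive integer. For every f : Ω → ℂ, ⟨(Δ_Ω^{l,D})² f, f⟩_Ω ≤ ⟨Δ_Ω^{2l,D} f, f⟩_Ω, where Δ_Ω^{m,D} f := (Δ^m f*)|_Ω and f* is the zero extension. -/
open Finset

variable {V : Type*}

noncomputable def graphLap (G : SimpleGraph V) [DecidableRel G.Adj] [G.LocallyFinite]
    (f : V → ℂ) : V → ℂ :=
  fun x => ∑ y ∈ G.neighborFinset x, (f y - f x)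

noncomputable def extZero [DecidableEq V] (Ω : Finset V) (f : V → ℂ) : V → ℂ :=
  fun x => if x ∈ Ω then f x else 0

noncomputable def dirichletPolyLap [DecidableEq V] (G : SimpleGraph V) [DecidableRel G.Adj]
    [G.LocallyFinite] (Ω : Finset V) (l : ℕ) (f : V → ℂ) : V → ℂ :=
  (graphLap G)^[l] (extZero Ω f)

noncomputable def innerOmega (Ω : Finset V) (f g : V → ℂ) : ℂ :=
  ∑ x ∈ Ω, f x * (starRingEnd ℂ) (g x)

/-!
Write `g := Δ^l f*`, a finitely supported function. For finitely supported functions the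
Laplacian is symmetric with respect to `∑ᶠ x, u x * conj (v x)`, since the adjacency relation
is. Moving `Δ^l` across turns the left side into `∑_{x ∈ Ω} |g x|²` and the right side into
`∑_{x ∈ V} |g x|²`, and the first sum has fewer nonnegative terms.
-/

open Function

namespace graphLap

variable (G : SimpleGraph V) [DecidableRel G.Adj] [G.LocallyFinite]

theorem apply_eq_sum_sub_degree_mul (u : V → ℂ) (x : V) :
    graphLap G u x = ∑ y ∈ G.neighborFinset x, u y - G.degree x * u x := by
  simp [graphLap, Finset.sum_sub_distrib, SimpleGraph.card_neighborFinset_eq_degree]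

theorem support_subset (u : V → ℂ) :
    support (graphLap G u) ⊆ support u ∪ ⋃ y ∈ support u, G.neighborSet y := by
  intro x hx
  by_contra hout
  simp only [Set.mem_union, Set.mem_iUnion, SimpleGraph.mem_neighborSet, mem_support,
    not_or, not_exists, not_not] at hout
  refine hx (Finset.sum_eq_zero fun y hy => ?_)
  rw [SimpleGraph.mem_neighborFinset] at hy
  rw [hout.1, sub_zero]
  by_contra hy0
  exact hout.2 y hy0 hy.symm

theorem finite_support {u : V → ℂ} (hu : (support u).Finite) :
    (support (graphLap G u)).Finite :=
  (hu.union (hu.biUnion fun y _ => (G.neighborSet y).toFinite)).subset (support_subset G u)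

theorem finite_support_iterate {u : V → ℂ} (hu : (support u).Finite) (l : ℕ) :
    (support ((graphLap G)^[l] u)).Finite := by
  induction l with
  | zero => exact hu
  | succ l ih =>
    rw [iterate_succ_apply']
    exact finite_support G ih

theorem sum_neighborFinset_eq_sum_ite {T : Finset V} {u : V → ℂ} (hu : support u ⊆ T)
    (x : V) : ∑ y ∈ G.neighborFinset x, u y = ∑ y ∈ T, if G.Adj x y then u y else 0 := by
  rw [← Finset.sum_filter]
  refine (Finset.sum_subset (fun y hy => ?_) fun y _ hyT => ?_).symm
  · exact (G.mem_neighborFinset x y).2 (Finset.mem_filter.1 hy).2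
  · exact notMem_support.1 fun hy => hyT (Finset.mem_filter.2 ⟨hu hy, by simp_all⟩)

theorem sum_mul_conj_comm {T : Finset V} {u v : V → ℂ} (hu : support u ⊆ T)
    (hv : support v ⊆ T) :
    ∑ x ∈ T, graphLap G u x * starRingEnd ℂ (v x)
      = ∑ x ∈ T, u x * starRingEnd ℂ (graphLap G v x) := by
  simp only [apply_eq_sum_sub_degree_mul, sum_neighborFinset_eq_sum_ite G hu,
    sum_neighborFinset_eq_sum_ite G hv, map_sub, map_sum, map_mul, apply_ite,
    map_zero, Complex.conj_natCast, sub_mul, mul_sub, Finset.sum_mul, Finset.mul_sum,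
    Finset.sum_sub_distrib, ite_mul, zero_mul, mul_zero]
  rw [Finset.sum_comm]
  congr 1
  · simp only [G.adj_comm]
  · exact Finset.sum_congr rfl fun x _ => by ring

theorem finsum_mul_conj_comm {u v : V → ℂ} (hu : (support u).Finite)
    (hv : (support v).Finite) :
    ∑ᶠ x, graphLap G u x * starRingEnd ℂ (v x)
      = ∑ᶠ x, u x * starRingEnd ℂ (graphLap G v x) := by
  set T := (hu.union hv).toFinset
  have huT : support u ⊆ T := by simp [T]
  have hvT : support v ⊆ T := by simp [T]
  rw [finsum_eq_finsetSum_of_support_subset _ (s := T)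
      ((support_mul_subset_right _ _).trans fun x hx => hvT (by simpa using hx)),
    finsum_eq_finsetSum_of_support_subset _ (s := T) ((support_mul_subset_left _ _).trans huT)]
  exact sum_mul_conj_comm G huT hvT

theorem finsum_iterate_mul_conj_comm {u v : V → ℂ} (hu : (support u).Finite)
    (hv : (support v).Finite) (l : ℕ) :
    ∑ᶠ x, (graphLap G)^[l] u x * starRingEnd ℂ (v x)
      = ∑ᶠ x, u x * starRingEnd ℂ ((graphLap G)^[l] v x) := by
  induction l generalizing u with
  | zero => rfl
  | succ l ih =>
    rw [iterate_succ_apply, ih (finite_support G hu),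
      finsum_mul_conj_comm G hu (finite_support_iterate G hv l), iterate_succ_apply']

end graphLap

section extZero

variable [DecidableEq V] (Ω : Finset V)

theorem support_extZero_subset (f : V → ℂ) : support (extZero Ω f) ⊆ Ω := by
  intro x hx
  by_contra hxΩ
  exact hx (if_neg hxΩ)

theorem finite_support_extZero (f : V → ℂ) : (support (extZero Ω f)).Finite :=
  Ω.finite_toSet.subset (support_extZero_subset Ω f)

theorem finsum_mul_conj_extZero (w f : V → ℂ) :
    ∑ᶠ x, w x * starRingEnd ℂ (extZero Ω f x) = innerOmega Ω w f := by
  rw [finsum_eq_finsetSum_of_support_subset _ (s := Ω)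
    ((support_mul_subset_right _ _).trans fun x hx =>
      support_extZero_subset Ω f (by simpa using hx))]
  exact Finset.sum_congr rfl fun x hx => by simp [extZero, hx]

theorem finsum_extZero_mul_conj (w f : V → ℂ) :
    ∑ᶠ x, extZero Ω w x * starRingEnd ℂ (f x) = innerOmega Ω w f := by
  rw [finsum_eq_finsetSum_of_support_subset _ (s := Ω)
    ((support_mul_subset_left _ _).trans (support_extZero_subset Ω w))]
  exact Finset.sum_congr rfl fun x hx => by simp [extZero, hx]

end extZero

theorem innerOmega_self_re_le_finsum (Ω : Finset V) {g : V → ℂ} (hg : (support g).Finite) :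
    (innerOmega Ω g g).re ≤ (∑ᶠ x, g x * starRingEnd ℂ (g x)).re := by
  classical
  rw [finsum_eq_finsetSum_of_support_subset _ (s := Ω ∪ hg.toFinset)
    ((support_mul_subset_left _ _).trans (by simp)), innerOmega, Complex.re_sum, Complex.re_sum]
  refine Finset.sum_le_sum_of_subset_of_nonneg Finset.subset_union_left fun x _ _ => ?_
  rw [Complex.mul_conj']
  norm_cast
  positivity

theorem stmt_7_general [DecidableEq V] (G : SimpleGraph V) [DecidableRel G.Adj] [G.LocallyFinite]
    (Ω : Finset V) (l : ℕ) (f : V → ℂ) :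
    (innerOmega Ω (dirichletPolyLap G Ω l (dirichletPolyLap G Ω l f)) f).re
      ≤ (innerOmega Ω (dirichletPolyLap G Ω (2 * l) f) f).re := by
  let g := (graphLap G)^[l] (extZero Ω f)
  have hF := finite_support_extZero Ω f
  have hg : (support g).Finite := graphLap.finite_support_iterate G hF l
  have hLHS : innerOmega Ω ((graphLap G)^[l] (extZero Ω g)) f = innerOmega Ω g g := by
    rw [← finsum_mul_conj_extZero, graphLap.finsum_iterate_mul_conj_comm G
      (finite_support_extZero Ω g) hF, finsum_extZero_mul_conj]
  have hRHS : innerOmega Ω ((graphLap G)^[l] g) f = ∑ᶠ x, g x * starRingEnd ℂ (g x) := by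
    rw [← finsum_mul_conj_extZero, graphLap.finsum_iterate_mul_conj_comm G hg hF]
  simp only [dirichletPolyLap, two_mul, iterate_add_apply]
  rw [hLHS, hRHS]
  exact innerOmega_self_re_le_finsum Ω hg

/-- `⟨(Δ_Ω^{l,D})² f, f⟩_Ω ≤ ⟨Δ_Ω^{2l,D} f, f⟩_Ω` (both sides are real numbers). -/
theorem stmt_7 [DecidableEq V] (G : SimpleGraph V) [DecidableRel G.Adj] [G.LocallyFinite]
    (Ω : Finset V) (l : ℕ) (hl : 0 < l) (f : V → ℂ) :
    (innerOmega Ω (dirichletPolyLap G Ω l (dirichletPolyLap G Ω l f)) f).re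
      ≤ (innerOmega Ω (dirichletPolyLap G Ω (2 * l) f) f).re :=
  stmt_7_general G Ω l f
end

section
/- Let d, l be positive integers, M, K > 0, and let F : [-π,π]^d → ℝ be measurable with 0 ≤ F ≤ M and ∫_{[-π,π]^d} F(z) dz ≥ K. Assume R := (K/(M·V_d))^{1/d} ≤ √6, where V_d is the volume of the unit ball in ℝ^d. Then ∫_{[-π,π]^d} Φ(z)^l F(z) dz ≥ Σ_{m=0}^l C(l,m) (-1/12)^m · (dK/(d+2(l+m))) · (K/(M V_d))^{2(l+m)/d}, and this lower bound is positive. Here Φ(z) = Σᵢ₌₁^d (2 - 2cos z_i). -/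
open Finset MeasureTheory Real

/-- The Fourier symbol `Φ(z) = ∑ᵢ (2 - 2 cos zᵢ)` of `-Δ` on `ℤ^d`. -/
noncomputable def PhiZ {d : ℕ} (z : Fin d → ℝ) : ℝ :=
  ∑ i : Fin d, (2 - 2 * Real.cos (z i))

/-- The cube `[-π, π]^d`. -/
def piCube (d : ℕ) : Set (Fin d → ℝ) := Set.univ.pi fun _ => Set.Icc (-π) π

/-- The volume `V_d` of the unit ball in `ℝ^d`. -/
noncomputable def unitBallVol (d : ℕ) : ℝ :=
  (volume (Metric.ball (0 : EuclideanSpace ℝ (Fin d)) 1)).toReal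

/-! On the cube, `Φ(z) ≥ w(|z|²)` for `w = phiMinorant`, i.e. `w(s) = s - s²/12` up to its peak
at `s = 6` and `w(s) = 3` beyond: coordinatewise this is `2 - 2 cos t = 4 sin² (t/2) ≥ t² - t⁴/12`
(or `cos t ≤ -1/2` once `t² ≥ 6`), and `w` is concave with `w(0) = 0`, hence subadditive.
As `w(|z|²)^l` is radial and nondecreasing in `|z|`, the bathtub principle shows that among
`0 ≤ F ≤ M` of mass at least `K` its integral against `F` is smallest for `F = M·1_B`, where `B` is
the ball of volume `K/M`, of radius `R`; `B` lies in the cube since `R ≤ √6 < π`. On `B` the weight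
is the polynomial `(|z|² - |z|⁴/12)^l`, integrated term by term in polar coordinates. -/

open scoped ENNReal
open Metric

noncomputable def phiMinorant (s : ℝ) : ℝ := min s 6 - min s 6 ^ 2 / 12

lemma phiMinorant_of_le {s : ℝ} (hs : s ≤ 6) : phiMinorant s = s - s ^ 2 / 12 := by
  rw [phiMinorant, min_eq_left hs]

lemma phiMinorant_of_ge {s : ℝ} (hs : 6 ≤ s) : phiMinorant s = 3 := by
  rw [phiMinorant, min_eq_right hs]; norm_num

@[fun_prop]
lemma continuous_phiMinorant : Continuous phiMinorant := by
  unfold phiMinorant; fun_prop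

lemma monotone_phiMinorant : Monotone phiMinorant := by
  intro a b hab
  have := min_le_min_right 6 hab
  simp only [phiMinorant]
  nlinarith [min_le_right a 6, min_le_right b 6]

lemma phiMinorant_nonneg {s : ℝ} (hs : 0 ≤ s) : 0 ≤ phiMinorant s := by
  simpa [phiMinorant] using monotone_phiMinorant hs

lemma phiMinorant_sq_pow_le_of_le {r s : ℝ} (hr : 0 ≤ r) (hrs : r ≤ s) (l : ℕ) :
    phiMinorant (r ^ 2) ^ l ≤ phiMinorant (s ^ 2) ^ l :=
  pow_le_pow_left₀ (phiMinorant_nonneg (sq_nonneg r))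
    (monotone_phiMinorant (pow_le_pow_left₀ hr hrs 2)) l

lemma half_le_phiMinorant {s : ℝ} (hs₀ : 0 ≤ s) (hs₆ : s ≤ 6) : s / 2 ≤ phiMinorant s := by
  rw [phiMinorant_of_le hs₆]; nlinarith

lemma phiMinorant_add_le {a b : ℝ} (ha : 0 ≤ a) (hb : 0 ≤ b) :
    phiMinorant (a + b) ≤ phiMinorant a + phiMinorant b := by
  rcases le_total (a + b) 6 with hab | hab
  · rw [phiMinorant_of_le hab, phiMinorant_of_le (by linarith), phiMinorant_of_le (by linarith)]
    nlinarith
  rw [phiMinorant_of_ge hab]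
  rcases le_total 6 a with ha6 | ha6
  · linarith [phiMinorant_of_ge ha6, phiMinorant_nonneg hb]
  rcases le_total 6 b with hb6 | hb6
  · linarith [phiMinorant_of_ge hb6, phiMinorant_nonneg ha]
  rw [phiMinorant_of_le ha6, phiMinorant_of_le hb6]
  nlinarith [mul_nonneg (sub_nonneg.2 ha6) (sub_nonneg.2 hb6)]

lemma sq_sub_pow_four_div_twelve_le_two_sub_two_cos {t : ℝ} (ht : t ^ 2 ≤ 24) :
    t ^ 2 - t ^ 4 / 12 ≤ 2 - 2 * cos t := by
  set s := |t| / 2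
  have hs : 0 ≤ s := by positivity
  have hts : t ^ 2 = 4 * s ^ 2 := by rw [← sq_abs t]; ring
  have hcos : cos t = 1 - 2 * sin s ^ 2 := by
    rw [← cos_abs, show |t| = 2 * s by ring, cos_two_mul, cos_sq']; ring
  have hsin := sin_ge_sub_cube hs
  have htaylor : 0 ≤ s - s ^ 3 / 6 := by nlinarith
  rw [hcos, show t ^ 4 = (t ^ 2) ^ 2 by ring, hts]
  nlinarith [mul_le_mul hsin hsin htaylor (htaylor.trans hsin)]

lemma phiMinorant_sq_le_two_sub_two_cos {t : ℝ} (ht : |t| ≤ π) :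
    phiMinorant (t ^ 2) ≤ 2 - 2 * cos t := by
  rcases le_total (t ^ 2) 6 with ht6 | ht6
  · rw [phiMinorant_of_le ht6, ← pow_mul]
    exact sq_sub_pow_four_div_twelve_le_two_sub_two_cos (by linarith)
  rw [phiMinorant_of_ge ht6]
  have h2π3 : 2 * π / 3 ≤ |t| := by
    by_contra! h
    nlinarith [sq_abs t, abs_nonneg t, pi_lt_d2, pi_pos]
  have hcos : cos |t| ≤ cos (2 * π / 3) :=
    cos_le_cos_of_nonneg_of_le_pi (by positivity) ht h2π3
  rw [cos_abs, show 2 * π / 3 = π - π / 3 by ring, cos_pi_sub, cos_pi_div_three] at hcos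
  linarith

lemma phiMinorant_sum_sq_le_PhiZ {d : ℕ} {z : Fin d → ℝ} (hz : z ∈ piCube d) :
    phiMinorant (∑ i, z i ^ 2) ≤ PhiZ z := by
  refine (le_sum_of_subadditive_on_pred phiMinorant (0 ≤ ·) (by simp [phiMinorant])
    (fun a b => phiMinorant_add_le) (fun a b => add_nonneg) _ fun i _ => sq_nonneg (z i)).trans ?_
  refine Finset.sum_le_sum fun i _ => phiMinorant_sq_le_two_sub_two_cos (abs_le.2 ?_)
  exact hz i (Set.mem_univ i)

theorem bathtub_mul_setIntegral_le_setIntegral_mul {α : Type*} [MeasurableSpace α]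
    {μ : Measure α} {S B : Set α} {ψ F : α → ℝ} {c M : ℝ}
    (hS : MeasurableSet S) (hSμ : μ S ≠ ∞) (hB : MeasurableSet B) (hBS : B ⊆ S)
    (hψ : IntegrableOn ψ S μ) (hF : AEStronglyMeasurable F μ)
    (hF0 : ∀ x ∈ S, 0 ≤ F x) (hFM : ∀ x ∈ S, F x ≤ M) (hc : 0 ≤ c)
    (hψB : ∀ x ∈ B, ψ x ≤ c) (hψSB : ∀ x ∈ S \ B, c ≤ ψ x)
    (hmass : M * μ.real B ≤ ∫ x in S, F x ∂μ) :
    M * ∫ x in B, ψ x ∂μ ≤ ∫ x in S, ψ x * F x ∂μ := by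
  have hFbdd : ∀ᵐ x ∂μ.restrict S, ‖F x‖ ≤ M := by
    filter_upwards [ae_restrict_mem hS] with x hx
    rw [Real.norm_eq_abs, abs_of_nonneg (hF0 x hx)]; exact hFM x hx
  have hFint : IntegrableOn F S μ :=
    Measure.integrableOn_of_bounded hSμ hF hFbdd
  have hψFint : IntegrableOn (fun x => ψ x * F x) S μ := hψ.mul_bdd hF.restrict hFbdd
  have hBμ : μ B ≠ ∞ := (measure_mono hBS).trans_lt hSμ.lt_top |>.ne
  -- `ψ - c` and `F - M 1_B` have the same sign on `S`.
  have hsign : ∀ x ∈ S, 0 ≤ (ψ x - c) * F x - B.indicator (fun x => M * (ψ x - c)) x := by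
    intro x hx
    by_cases hxB : x ∈ B
    · rw [Set.indicator_of_mem hxB]
      nlinarith [hψB x hxB, hFM x hx]
    · rw [Set.indicator_of_notMem hxB, sub_zero]
      exact mul_nonneg (sub_nonneg.2 (hψSB x ⟨hx, hxB⟩)) (hF0 x hx)
  have hint_B : IntegrableOn (fun x => M * (ψ x - c)) B μ :=
    ((hψ.mono_set hBS).sub (integrableOn_const hBμ)).const_mul M
  have hint_SF : IntegrableOn (fun x => (ψ x - c) * F x) S μ := by
    simp only [sub_mul]; exact hψFint.sub (hFint.const_mul c)
  have key := setIntegral_nonneg (μ := μ) hS hsign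
  rw [integral_sub hint_SF (hint_B.integrable_indicator hB).integrableOn,
    setIntegral_indicator hB, Set.inter_eq_right.2 hBS, integral_const_mul,
    integral_sub (hψ.mono_set hBS) (integrableOn_const hBμ), setIntegral_const, smul_eq_mul] at key
  simp only [sub_mul] at key
  rw [integral_sub hψFint (hFint.const_mul c), integral_const_mul] at key
  linarith [mul_le_mul_of_nonneg_left hmass hc]

lemma add_mul_sq_pow_eq_sum (a s : ℝ) (l : ℕ) :
    (s + a * s ^ 2) ^ l = ∑ m ∈ range (l + 1), (l.choose m : ℝ) * a ^ m * s ^ (l + m) := by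
  rw [add_comm, add_pow]
  refine Finset.sum_congr rfl fun m hm => ?_
  rw [mul_pow, ← pow_mul, show l + m = 2 * m + (l - m) by
    have := Finset.mem_range_succ_iff.1 hm; omega, pow_add]
  ring

section Polar

variable {E : Type*} [NormedAddCommGroup E] [NormedSpace ℝ E] [FiniteDimensional ℝ E]
  [MeasurableSpace E] [BorelSpace E] (μ : Measure E) [μ.IsAddHaarMeasure]

lemma integrableOn_closedBall_norm_pow (n : ℕ) (R : ℝ) :
    IntegrableOn (fun x : E => ‖x‖ ^ n) (closedBall 0 R) μ :=
  (continuous_norm.pow n).continuousOn.integrableOn_compact (isCompact_closedBall 0 R)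

variable [Nontrivial E]

theorem setIntegral_closedBall_norm_pow (n : ℕ) {R : ℝ} (hR : 0 ≤ R) :
    ∫ x in closedBall (0 : E) R, ‖x‖ ^ n ∂μ =
      Module.finrank ℝ E * μ.real (ball 0 1) * R ^ (Module.finrank ℝ E + n) /
        (Module.finrank ℝ E + n) := by
  set k := Module.finrank ℝ E
  have hk : 0 < k := Module.finrank_pos
  rw [← integral_indicator measurableSet_closedBall]
  have hind : (closedBall (0 : E) R).indicator (fun x => ‖x‖ ^ n) =
      fun x => (Set.Iic R).indicator (· ^ n) ‖x‖ := by
    ext x; simp [Set.indicator, mem_closedBall]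
  have hradial : ∫ y in Set.Ioi (0 : ℝ), y ^ (k - 1) • (Set.Iic R).indicator (· ^ n) y =
      R ^ (k + n) / (k + n) := by
    have hpow : (fun y : ℝ => y ^ (k - 1) • (Set.Iic R).indicator (· ^ n) y) =
        (Set.Iic R).indicator (· ^ (k - 1 + n)) := by
      ext y; by_cases hy : y ∈ Set.Iic R <;> simp [hy, pow_add]
    rw [hpow, integral_indicator measurableSet_Iic, Measure.restrict_restrict measurableSet_Iic,
      Set.Iic_inter_Ioi, ← intervalIntegral.integral_of_le hR, integral_pow,
      show k - 1 + n + 1 = k + n by omega, zero_pow (by omega), sub_zero]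
    push_cast [Nat.cast_sub hk]
    ring_nf
  rw [hind, integral_fun_norm_addHaar μ, hradial, nsmul_eq_mul, smul_eq_mul]
  ring

theorem setIntegral_closedBall_phiMinorant_pow (l : ℕ) {R : ℝ} (hR₀ : 0 ≤ R) (hR : R ^ 2 ≤ 6) :
    ∫ x in closedBall (0 : E) R, phiMinorant (‖x‖ ^ 2) ^ l ∂μ =
      ∑ m ∈ range (l + 1), (l.choose m : ℝ) * (-1 / 12) ^ m *
        (Module.finrank ℝ E * μ.real (ball 0 1) * R ^ (Module.finrank ℝ E + 2 * (l + m)) /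
          (Module.finrank ℝ E + 2 * (l + m) : ℕ)) := by
  have hexpand : ∀ x ∈ closedBall (0 : E) R, phiMinorant (‖x‖ ^ 2) ^ l =
      ∑ m ∈ range (l + 1), (l.choose m : ℝ) * (-1 / 12) ^ m * ‖x‖ ^ (2 * (l + m)) := by
    intro x hx
    have hx6 : ‖x‖ ^ 2 ≤ 6 :=
      (pow_le_pow_left₀ (norm_nonneg x) (mem_closedBall_zero_iff.1 hx) 2).trans hR
    simp only [phiMinorant_of_le hx6, pow_mul]
    rw [← add_mul_sq_pow_eq_sum]
    ring
  rw [setIntegral_congr_fun measurableSet_closedBall hexpand, integral_finsetSum _ fun m _ =>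
    (integrableOn_closedBall_norm_pow μ _ R).const_mul _]
  refine Finset.sum_congr rfl fun m _ => ?_
  rw [integral_const_mul, setIntegral_closedBall_norm_pow μ _ hR₀]
  push_cast
  ring

theorem setIntegral_closedBall_phiMinorant_pow_pos (l : ℕ) {R : ℝ} (hR₀ : 0 < R)
    (hR : R ^ 2 ≤ 6) : 0 < ∫ x in closedBall (0 : E) R, phiMinorant (‖x‖ ^ 2) ^ l ∂μ := by
  have hmono : ∀ x ∈ closedBall (0 : E) R, (1 / 2) ^ l * ‖x‖ ^ (2 * l) ≤
      phiMinorant (‖x‖ ^ 2) ^ l := by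
    intro x hx
    rw [pow_mul, ← mul_pow]
    refine pow_le_pow_left₀ (by positivity) ?_ l
    have hx6 := (pow_le_pow_left₀ (norm_nonneg x) (mem_closedBall_zero_iff.1 hx) 2).trans hR
    linarith [half_le_phiMinorant (sq_nonneg ‖x‖) hx6]
  calc (0 : ℝ) < (1 / 2) ^ l * ∫ x in closedBall (0 : E) R, ‖x‖ ^ (2 * l) ∂μ := by
        have hk : (0 : ℝ) < Module.finrank ℝ E := by exact_mod_cast Module.finrank_pos
        have hball : 0 < μ.real (ball (0 : E) 1) :=
          ENNReal.toReal_pos (measure_ball_pos μ 0 one_pos).ne' measure_ball_lt_top.ne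
        rw [setIntegral_closedBall_norm_pow μ _ hR₀.le]
        positivity
    _ ≤ _ := by
        rw [← integral_const_mul]
        refine setIntegral_mono_on ((integrableOn_closedBall_norm_pow μ _ R).const_mul _) ?_
          measurableSet_closedBall hmono
        exact ((continuous_phiMinorant.comp (continuous_norm.pow 2)).pow l).continuousOn
          |>.integrableOn_compact (isCompact_closedBall 0 R)

end Polar

lemma continuous_PhiZ (d : ℕ) : Continuous (PhiZ (d := d)) := by
  unfold PhiZ; fun_prop

lemma unitBallVol_eq_measureReal (d : ℕ) :
    unitBallVol d = volume.real (ball (0 : EuclideanSpace ℝ (Fin d)) 1) := rfl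

lemma unitBallVol_pos (d : ℕ) : 0 < unitBallVol d :=
  ENNReal.toReal_pos (measure_ball_pos volume 0 one_pos).ne' measure_ball_lt_top.ne

lemma isCompact_piCube (d : ℕ) : IsCompact (piCube d) :=
  isCompact_univ_pi fun _ => isCompact_Icc

lemma preimage_toLp_closedBall_subset_piCube {d : ℕ} {R : ℝ} (hR : R ≤ π) :
    WithLp.toLp 2 ⁻¹' closedBall (0 : EuclideanSpace ℝ (Fin d)) R ⊆ piCube d := by
  intro z hz i _
  have hzi : |z i| ≤ π :=
    (PiLp.norm_apply_le (WithLp.toLp 2 z) i).trans ((mem_closedBall_zero_iff.1 hz).trans hR)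
  exact abs_le.1 hzi

lemma volume_real_preimage_toLp_closedBall {d : ℕ} {R : ℝ} (hR : 0 ≤ R) :
    volume.real (WithLp.toLp 2 ⁻¹' closedBall (0 : EuclideanSpace ℝ (Fin d)) R) =
      R ^ d * unitBallVol d := by
  rw [measureReal_def, (PiLp.volume_preserving_toLp (Fin d)).measure_preimage
    measurableSet_closedBall.nullMeasurableSet, ← measureReal_def,
    Measure.addHaar_real_closedBall _ _ hR, finrank_euclideanSpace_fin, unitBallVol_eq_measureReal]

lemma rpow_one_div_pow_add {a : ℝ} (ha : 0 ≤ a) {d : ℕ} (hd : d ≠ 0) (k : ℕ) :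
    (a ^ ((1 : ℝ) / d)) ^ (d + k) = a * a ^ ((k : ℝ) / d) := by
  rw [← rpow_natCast, ← rpow_mul ha, Nat.cast_add, mul_add, one_div_mul_cancel (by positivity),
    rpow_add' ha (by positivity), rpow_one, one_div_mul_eq_div]

theorem mul_setIntegral_closedBall_le_setIntegral_PhiZ_pow_mul {d : ℕ} (l : ℕ) {R M : ℝ}
    (hR₀ : 0 ≤ R) (hRπ : R ≤ π) {F : (Fin d → ℝ) → ℝ} (hmeas : Measurable F)
    (hF0 : ∀ z, 0 ≤ F z) (hFM : ∀ z, F z ≤ M)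
    (hmass : M * (R ^ d * unitBallVol d) ≤ ∫ z in piCube d, F z) :
    M * ∫ x in closedBall (0 : EuclideanSpace ℝ (Fin d)) R, phiMinorant (‖x‖ ^ 2) ^ l ≤
      ∫ z in piCube d, PhiZ z ^ l * F z := by
  set B := WithLp.toLp 2 ⁻¹' closedBall (0 : EuclideanSpace ℝ (Fin d)) R
  set Ψ : (Fin d → ℝ) → ℝ := fun z => phiMinorant (‖WithLp.toLp 2 z‖ ^ 2) ^ l
  have hcube := isCompact_piCube d
  have hB : MeasurableSet B :=
    measurableSet_closedBall.preimage (MeasurableEquiv.toLp 2 (Fin d → ℝ)).measurable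
  have hΨ_le : ∀ z ∈ piCube d, Ψ z ≤ PhiZ z ^ l := fun z hz =>
    pow_le_pow_left₀ (phiMinorant_nonneg (sq_nonneg _))
      (by simpa [EuclideanSpace.real_norm_sq_eq] using phiMinorant_sum_sq_le_PhiZ hz) l
  rw [← (PiLp.volume_preserving_toLp (Fin d)).setIntegral_preimage_emb
      (MeasurableEquiv.toLp 2 (Fin d → ℝ)).measurableEmbedding
      (fun x : EuclideanSpace ℝ (Fin d) => phiMinorant (‖x‖ ^ 2) ^ l)]
  calc M * ∫ z in B, Ψ z ≤ ∫ z in piCube d, Ψ z * F z := by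
        refine bathtub_mul_setIntegral_le_setIntegral_mul hcube.measurableSet
          hcube.measure_lt_top.ne hB (preimage_toLp_closedBall_subset_piCube hRπ)
          ((by simp only [Ψ]; fun_prop : Continuous Ψ).continuousOn.integrableOn_compact hcube)
          hmeas.aestronglyMeasurable (fun z _ => hF0 z) (fun z _ => hFM z)
          (pow_nonneg (phiMinorant_nonneg (sq_nonneg R)) l) (fun z hz => ?_) (fun z hz => ?_)
          (volume_real_preimage_toLp_closedBall hR₀ ▸ hmass)
        · exact phiMinorant_sq_pow_le_of_le (norm_nonneg _) (mem_closedBall_zero_iff.1 hz) l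
        · exact phiMinorant_sq_pow_le_of_le hR₀
            (not_le.1 fun h => hz.2 (mem_closedBall_zero_iff.2 h)).le l
    _ ≤ ∫ z in piCube d, PhiZ z ^ l * F z := by
        refine integral_mono_of_nonneg (ae_of_all _ fun z =>
          mul_nonneg (pow_nonneg (phiMinorant_nonneg (sq_nonneg _)) l) (hF0 z)) ?_ ?_
        · exact ((continuous_PhiZ d).pow l).continuousOn.integrableOn_compact hcube |>.mul_bdd
            hmeas.aestronglyMeasurable
            (ae_of_all _ fun z => (norm_of_nonneg (hF0 z)).trans_le (hFM z))
        · filter_upwards [ae_restrict_mem hcube.measurableSet] with z hz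
          exact mul_le_mul_of_nonneg_right (hΨ_le z hz) (hF0 z)

theorem stmt_15_general (d l : ℕ) (hd : 0 < d) (M K : ℝ) (hM : 0 < M) (hK : 0 < K)
    (F : (Fin d → ℝ) → ℝ) (hmeas : Measurable F)
    (hF0 : ∀ z, 0 ≤ F z) (hFM : ∀ z, F z ≤ M)
    (hint : K ≤ ∫ z in piCube d, F z)
    (hR : (K / (M * unitBallVol d)) ^ ((1 : ℝ) / d) ≤ Real.sqrt 6) :
    (∑ m ∈ Finset.range (l + 1), (l.choose m : ℝ) * (-1 / 12) ^ m *
        (d * K / (d + 2 * (l + m))) *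
        (K / (M * unitBallVol d)) ^ ((2 * (l + m) : ℝ) / d)
      ≤ ∫ z in piCube d, PhiZ z ^ l * F z) ∧
    0 < ∑ m ∈ Finset.range (l + 1), (l.choose m : ℝ) * (-1 / 12) ^ m *
        (d * K / (d + 2 * (l + m))) *
        (K / (M * unitBallVol d)) ^ ((2 * (l + m) : ℝ) / d) := by
  have : Nontrivial (EuclideanSpace ℝ (Fin d)) :=
    Module.nontrivial_of_finrank_pos (R := ℝ) (by simpa using hd)
  set a := K / (M * unitBallVol d)
  set R := a ^ ((1 : ℝ) / d)
  have hMV : 0 < M * unitBallVol d := mul_pos hM (unitBallVol_pos d)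
  have ha : 0 < a := div_pos hK hMV
  have hMVa : M * unitBallVol d * a = K := mul_div_cancel₀ K hMV.ne'
  have hR₀ : 0 < R := by positivity
  have hR6 : R ^ 2 ≤ 6 := by simpa using pow_le_pow_left₀ hR₀.le hR 2
  have hRπ : R ≤ π := hR.trans (sqrt_le_iff.2 ⟨pi_pos.le, by nlinarith [pi_gt_three]⟩)
  have hRd : R ^ d = a := by simp only [R, one_div]; exact rpow_inv_natCast_pow ha.le hd.ne'
  have hmodel : M * ∫ x in closedBall (0 : EuclideanSpace ℝ (Fin d)) R, phiMinorant (‖x‖ ^ 2) ^ l =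
      ∑ m ∈ Finset.range (l + 1), (l.choose m : ℝ) * (-1 / 12) ^ m *
        (d * K / (d + 2 * (l + m))) * a ^ ((2 * (l + m) : ℝ) / d) := by
    rw [setIntegral_closedBall_phiMinorant_pow _ l hR₀.le hR6, mul_sum]
    refine Finset.sum_congr rfl fun m _ => ?_
    rw [finrank_euclideanSpace_fin, ← unitBallVol_eq_measureReal, rpow_one_div_pow_add ha.le hd.ne',
      ← hMVa]
    push_cast
    field_simp
  rw [← hmodel]
  refine ⟨mul_setIntegral_closedBall_le_setIntegral_PhiZ_pow_mul l hR₀.le hRπ hmeas hF0 hFM ?_,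
    mul_pos hM (setIntegral_closedBall_phiMinorant_pow_pos _ l hR₀ hR6)⟩
  rw [hRd]
  linarith

/-- Li–Yau type rearrangement lemma for the symbol `Φ` on `[-π,π]^d`. -/
theorem stmt_15 (d l : ℕ) (hd : 0 < d) (hl : 0 < l) (M K : ℝ) (hM : 0 < M) (hK : 0 < K)
    (F : (Fin d → ℝ) → ℝ) (hmeas : Measurable F)
    (hF0 : ∀ z, 0 ≤ F z) (hFM : ∀ z, F z ≤ M)
    (hint : K ≤ ∫ z in piCube d, F z)
    (hR : (K / (M * unitBallVol d)) ^ ((1 : ℝ) / d) ≤ Real.sqrt 6) :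
    (∑ m ∈ Finset.range (l + 1), (l.choose m : ℝ) * (-1 / 12) ^ m *
        (d * K / (d + 2 * (l + m))) *
        (K / (M * unitBallVol d)) ^ ((2 * (l + m) : ℝ) / d)
      ≤ ∫ z in piCube d, PhiZ z ^ l * F z) ∧
    0 < ∑ m ∈ Finset.range (l + 1), (l.choose m : ℝ) * (-1 / 12) ^ m *
        (d * K / (d + 2 * (l + m))) *
        (K / (M * unitBallVol d)) ^ ((2 * (l + m) : ℝ) / d) :=
  stmt_15_general d l hd M K hM hK F hmeas hF0 hFM hint hR
end
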